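/- arXiv:1907.09689 — 2 statements merged into one kernel-verified Lean document; each statement's English description precedes it below -/
import Mathlib

section
/- Let ξ be a state on Mat_n(ℂ) and let φ : Mat_n(ℂ) → Mat_n(ℂ) be a completely positive unital map with Kraus decomposition φ = Σᵢ₌₁^p Ad_{Vᵢ}. If φ(A)P_ξ = A P_ξ for all A ∈ Mat_n(ℂ) (where P_ξ is the support projection of ξ), then there exist complex numbers α₁,…,α_p with Vᵢ = αᵢ·1ₙ for all i and Σᵢ |αᵢ|² = 1. In particular φ = id. -/
/-!
A nonzero vector `x = P v` in the support of `ξ` satisfies `φ(A) x = A x` for every `A`.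
Testing this on the rank-one matrices `A = u x*` gives `∑ conj(aᵢ) Vᵢ = 1` with
`aᵢ = ⟨x, Vᵢ x⟩ / ‖x‖²`, and pairing that identity with `x` gives `∑ |aᵢ|² = 1`.
Then `∑ (Vᵢ - aᵢ)(Vᵢ - aᵢ)* = ∑ VᵢVᵢ* - 1 - 1 + ∑ |aᵢ|² = 0` is a vanishing sum of positive
matrices, so `Vᵢ = aᵢ` for every `i`.
-/

open Matrix ComplexOrder

theorem sum_dotProduct_conjTranspose_smul_eq_smul_one {R m ι : Type*} [CommRing R] [StarRing R]
    [Fintype m] [DecidableEq m] [Fintype ι] (V : ι → Matrix m m R) (x y : m → R)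
    (hx : ∀ A : Matrix m m R, (∑ i, V i * A * (V i)ᴴ) *ᵥ x = A *ᵥ x) :
    ∑ i, (star y ⬝ᵥ ((V i)ᴴ *ᵥ x)) • V i = (star y ⬝ᵥ x) • (1 : Matrix m m R) := by
  refine ext_of_mulVec_single fun j => ?_
  have h := hx (vecMulVec (Pi.single j 1) (star y))
  simp only [sum_mulVec, ← mulVec_mulVec, vecMulVec_mulVec, op_smul_eq_smul, mulVec_smul] at h
  simpa only [sum_mulVec, smul_mulVec, one_mulVec] using h

theorem star_dotProduct_conjTranspose_mulVec {R m : Type*} [CommSemiring R] [StarRing R]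
    [Fintype m] (M : Matrix m m R) (x y : m → R) :
    star (star y ⬝ᵥ (Mᴴ *ᵥ x)) = star x ⬝ᵥ (M *ᵥ y) := by
  rw [star_dotProduct, star_mulVec, conjTranspose_conjTranspose, ← dotProduct_mulVec, star_star]

theorem exists_sum_star_smul_eq_one {𝕜 m ι : Type*} [Field 𝕜] [StarRing 𝕜]
    [Fintype m] [DecidableEq m] [Fintype ι] (V : ι → Matrix m m 𝕜) (x : m → 𝕜)
    (hx : ∀ A : Matrix m m 𝕜, (∑ i, V i * A * (V i)ᴴ) *ᵥ x = A *ᵥ x)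
    (hc : star x ⬝ᵥ x ≠ 0) :
    ∃ a : ι → 𝕜, ∑ i, star (a i) • V i = 1 ∧ ∑ i, star (a i) * a i = 1 := by
  set c := star x ⬝ᵥ x
  set β : ι → 𝕜 := fun i => star x ⬝ᵥ ((V i)ᴴ *ᵥ x)
  have hβ : ∑ i, β i • V i = c • 1 := sum_dotProduct_conjTranspose_smul_eq_smul_one V x x hx
  have hβnorm : ∑ i, β i * star (β i) = c * c := by
    have h := congrArg (fun M => star x ⬝ᵥ (M *ᵥ x)) hβ
    simpa only [sum_mulVec, smul_mulVec, one_mulVec, dotProduct_sum, dotProduct_smul, smul_eq_mul,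
      β, star_dotProduct_conjTranspose_mulVec] using h
  have hcstar : star c = c := (star_dotProduct x x).symm
  refine ⟨fun i => star (β i) / c, ?_, ?_⟩
  · simp only [star_div₀, star_star, hcstar]
    simp only [div_eq_inv_mul, mul_smul]
    rw [← Finset.smul_sum, hβ, inv_smul_smul₀ hc]
  · simp only [star_div₀, star_star, hcstar, div_mul_div_comm]
    rw [← Finset.sum_div, hβnorm, div_self (mul_ne_zero hc hc)]

theorem sum_sub_smul_one_mul_star_eq_zero {R A ι : Type*} [CommRing R] [StarRing R]
    [Ring A] [StarRing A] [Algebra R A] [StarModule R A] [Fintype ι] (V : ι → A) (a : ι → R)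
    (hV : ∑ i, V i * star (V i) = 1) (ha : ∑ i, star (a i) • V i = 1)
    (hnorm : ∑ i, star (a i) * a i = 1) :
    ∑ i, (V i - a i • 1) * star (V i - a i • 1) = 0 := by
  have hexpand : ∀ i, (V i - a i • 1) * star (V i - a i • (1 : A)) =
      V i * star (V i) - star (a i) • V i - star (star (a i) • V i) + (star (a i) * a i) • 1 := by
    intro i
    simp only [star_sub, star_smul, star_one, star_star, sub_mul, mul_sub, smul_mul_assoc,
      mul_smul_comm, one_mul, mul_one]
    module
  simp only [hexpand, Finset.sum_add_distrib, Finset.sum_sub_distrib, ← star_sum,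
    ← Finset.sum_smul, hV, ha, hnorm, star_one, one_smul, sub_self, zero_sub, neg_add_cancel]

theorem eq_zero_of_sum_mul_conjTranspose_eq_zero {𝕜 m ι : Type*} [RCLike 𝕜] [Fintype m]
    [Fintype ι] (N : ι → Matrix m m 𝕜) (h : ∑ i, N i * (N i)ᴴ = 0) (i : ι) : N i = 0 := by
  have htrace : ∑ i, (N i * (N i)ᴴ).trace = 0 := by rw [← trace_sum, h, trace_zero]
  rw [Finset.sum_eq_zero_iff_of_nonneg fun i _ =>
    (posSemidef_self_mul_conjTranspose _).trace_nonneg] at htrace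
  exact trace_mul_conjTranspose_self_eq_zero_iff.mp (htrace i (Finset.mem_univ i))

open Matrix ComplexOrder in
theorem stmt_11_general {n : ℕ}
    (σ : Matrix (Fin n) (Fin n) ℂ) (hσtr : σ.trace = 1)
    (P : Matrix (Fin n) (Fin n) ℂ)
    (hsupp : ∀ B : Matrix (Fin n) (Fin n) ℂ, (σ * (Bᴴ * B)).trace = 0 ↔ B * P = 0)
    {p : ℕ} (V : Fin p → Matrix (Fin n) (Fin n) ℂ)
    (hunital : ∑ i, V i * (V i)ᴴ = 1)
    (hae : ∀ A : Matrix (Fin n) (Fin n) ℂ, (∑ i, V i * A * (V i)ᴴ) * P = A * P) :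
    ∃ α : Fin p → ℂ,
      (∀ i, V i = α i • (1 : Matrix (Fin n) (Fin n) ℂ)) ∧
      (∑ i, ‖α i‖ ^ 2 = 1) ∧
      (∀ A : Matrix (Fin n) (Fin n) ℂ, ∑ i, V i * A * (V i)ᴴ = A) := by
  have hP : P ≠ 0 := fun h => by simpa [hσtr] using (hsupp 1).mpr (by simp [h])
  obtain ⟨v, hv⟩ : ∃ v, P *ᵥ v ≠ 0 := by
    by_contra! h
    exact hP (ext_of_mulVec_single fun j => by rw [h, zero_mulVec])
  have hfix : ∀ A, (∑ i, V i * A * (V i)ᴴ) *ᵥ (P *ᵥ v) = A *ᵥ (P *ᵥ v) := fun A => by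
    rw [mulVec_mulVec, hae, ← mulVec_mulVec]
  obtain ⟨α, hα, hnorm⟩ :=
    exists_sum_star_smul_eq_one V _ hfix (dotProduct_star_self_eq_zero.not.mpr hv)
  have hV : ∀ i, V i = α i • 1 := fun i => sub_eq_zero.mp <|
    eq_zero_of_sum_mul_conjTranspose_eq_zero _
      (sum_sub_smul_one_mul_star_eq_zero V α hunital hα hnorm) i
  have hnorm' : ∑ i, (‖α i‖ ^ 2 : ℂ) = 1 := by
    simpa only [Complex.star_def, Complex.conj_mul'] using hnorm
  refine ⟨α, hV, by exact_mod_cast hnorm', fun A => ?_⟩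
  simp only [hV, conjTranspose_smul, conjTranspose_one, smul_mul_assoc, mul_smul_comm, one_mul,
    mul_one, smul_smul, ← Finset.sum_smul, hnorm, one_smul]

open Matrix ComplexOrder in
theorem stmt_11 {n : ℕ}
    (σ : Matrix (Fin n) (Fin n) ℂ) (hσ : σ.PosSemidef) (hσtr : σ.trace = 1)
    (P : Matrix (Fin n) (Fin n) ℂ) (hP1 : Pᴴ = P) (hP2 : P * P = P)
    (hsupp : ∀ B : Matrix (Fin n) (Fin n) ℂ, (σ * (Bᴴ * B)).trace = 0 ↔ B * P = 0)
    {p : ℕ} (V : Fin p → Matrix (Fin n) (Fin n) ℂ)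
    (hunital : ∑ i, V i * (V i)ᴴ = 1)
    (hae : ∀ A : Matrix (Fin n) (Fin n) ℂ, (∑ i, V i * A * (V i)ᴴ) * P = A * P) :
    ∃ α : Fin p → ℂ,
      (∀ i, V i = α i • (1 : Matrix (Fin n) (Fin n) ℂ)) ∧
      (∑ i, ‖α i‖ ^ 2 = 1) ∧
      (∀ A : Matrix (Fin n) (Fin n) ℂ, ∑ i, V i * A * (V i)ᴴ = A) :=
  stmt_11_general σ hσtr P hsupp V hunital hae
end

section
/- Let F : Mat_m(ℂ) → Mat_n(ℂ) and R : Mat_n(ℂ) → Mat_m(ℂ) be completely positive unital maps with Kraus decompositions R = Σᵢ₌₁^p Ad_{Rᵢ} and F = Σⱼ₌₁^q Ad_{Fⱼ}. If there is a state ξ on Mat_m(ℂ) such that R(F(B))P_ξ = B P_ξ for all B ∈ Mat_m(ℂ), then there exist complex numbers α_{ij} with Rᵢ Fⱼ = α_{ij}·1ₘ for all i, j and Σ_{i,j} |α_{ij}|² = 1. In particular R ∘ F = id on Mat_m(ℂ). -/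
/-!
Write `Φ = R ∘ F` as the Kraus map with operators `Tₖ = Rᵢ Fⱼ`. For every `B`, the defects
`Aₖ = (Tₖᴴ B - B Tₖᴴ) P` satisfy `∑ₖ Aₖᴴ Aₖ = Pᴴ (Bᴴ Φ(1) B - Bᴴ Φ(B) - Φ(Bᴴ) B + Φ(Bᴴ B)) P`,
which vanishes because `Φ(1) = 1` and `Φ(X) P = X P`; so each `Tₖᴴ` commutes with every matrix
on the range of `P`. As `P ≠ 0` (the state has trace one), testing this against rank-one matrices
forces each `Tₖ` to be a scalar `αₖ`, and `Φ(1) = 1` becomes `∑ |αₖ|² = 1`.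
-/

open Matrix ComplexOrder

variable {𝕜 ι κ m n o : Type*} [RCLike 𝕜] [Fintype ι] [Fintype κ] [Fintype n] [Fintype o]

def krausMap (K : ι → Matrix m n 𝕜) (B : Matrix n n 𝕜) : Matrix m m 𝕜 :=
  ∑ k, K k * B * (K k)ᴴ

theorem krausMap_krausMap (R : ι → Matrix m n 𝕜) (F : κ → Matrix n o 𝕜) (B : Matrix o o 𝕜) :
    krausMap R (krausMap F B) = krausMap (fun k : ι × κ => R k.1 * F k.2) B := by
  simp only [krausMap, Fintype.sum_prod_type, Matrix.mul_sum, Matrix.sum_mul,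
    conjTranspose_mul, Matrix.mul_assoc]

theorem conjTranspose_krausMap (K : ι → Matrix m n 𝕜) (B : Matrix n n 𝕜) :
    (krausMap K B)ᴴ = krausMap K Bᴴ := by
  simp only [krausMap, conjTranspose_sum, conjTranspose_mul, conjTranspose_conjTranspose,
    Matrix.mul_assoc]

theorem krausMap_smul_one [DecidableEq n] (α : ι → 𝕜) (B : Matrix n n 𝕜) :
    krausMap (fun k => α k • (1 : Matrix n n 𝕜)) B = ((∑ k, ‖α k‖ ^ 2 : ℝ) : 𝕜) • B := by
  simp only [krausMap, conjTranspose_smul, conjTranspose_one, smul_mul, Matrix.mul_smul,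
    Matrix.one_mul, Matrix.mul_one, smul_smul, RCLike.star_def, RCLike.conj_mul,
    RCLike.ofReal_sum, RCLike.ofReal_pow, Finset.sum_smul]

theorem eq_zero_of_sum_conjTranspose_mul_self_eq_zero [Fintype m] {A : ι → Matrix m n 𝕜}
    (h : ∑ k, (A k)ᴴ * A k = 0) (k : ι) : A k = 0 := by
  have htrace : ∑ k, ((A k)ᴴ * A k).trace = 0 := by rw [← trace_sum, h, trace_zero]
  rw [Fintype.sum_eq_zero_iff_of_nonneg
    fun k => (posSemidef_conjTranspose_mul_self (A k)).trace_nonneg] at htrace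
  exact trace_conjTranspose_mul_self_eq_zero_iff.mp (congrFun htrace k)

theorem exists_eq_smul_one_of_mulVec_comm [DecidableEq n] {M : Matrix n n 𝕜} {v : n → 𝕜}
    (hv : v ≠ 0) (h : ∀ B : Matrix n n 𝕜, M *ᵥ (B *ᵥ v) = B *ᵥ (M *ᵥ v)) :
    ∃ c : 𝕜, M = c • 1 := by
  obtain ⟨i, hi⟩ := Function.ne_iff.mp hv
  set w : n → 𝕜 := Pi.single i (v i)⁻¹
  have hwv : w ⬝ᵥ v = 1 := by simpa [w] using inv_mul_cancel₀ hi
  refine ⟨w ⬝ᵥ (M *ᵥ v), ext_iff_mulVec.mpr fun u => ?_⟩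
  have hu := h (vecMulVec u w)
  simp only [vecMulVec_mulVec, hwv, MulOpposite.op_one, one_smul, op_smul_eq_smul] at hu
  rw [hu, smul_mulVec, one_mulVec]

theorem exists_eq_smul_one_of_mul_mul_eq [DecidableEq n] [DecidableEq o] {M : Matrix n n 𝕜}
    {P : Matrix n o 𝕜} (hP : P ≠ 0) (h : ∀ B : Matrix n n 𝕜, M * B * P = B * M * P) :
    ∃ c : 𝕜, M = c • 1 := by
  obtain ⟨l, hl⟩ : ∃ l, P *ᵥ Pi.single l 1 ≠ 0 := by
    by_contra! h0
    exact hP (ext_of_mulVec_single fun l => by rw [h0 l, zero_mulVec])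
  refine exists_eq_smul_one_of_mulVec_comm hl fun B => ?_
  simp only [mulVec_mulVec, ← Matrix.mul_assoc, h B]

theorem conjTranspose_mul_mul_eq_of_krausMap_mul_eq [DecidableEq n] {T : ι → Matrix n n 𝕜}
    (hT : krausMap T 1 = 1) {P : Matrix n o 𝕜} (h : ∀ B, krausMap T B * P = B * P)
    (B : Matrix n n 𝕜) (k : ι) : (T k)ᴴ * B * P = B * (T k)ᴴ * P := by
  have h' : Pᴴ * krausMap T Bᴴ = Pᴴ * Bᴴ := by
    simpa only [conjTranspose_mul, conjTranspose_krausMap] using congrArg conjTranspose (h B)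
  set A : ι → Matrix n o 𝕜 := fun k => (T k)ᴴ * B * P - B * (T k)ᴴ * P
  have hA : ∀ k, (A k)ᴴ * A k = Pᴴ * Bᴴ * (T k * 1 * (T k)ᴴ) * B * P
      - Pᴴ * Bᴴ * (T k * B * (T k)ᴴ) * P - Pᴴ * (T k * Bᴴ * (T k)ᴴ) * B * P
      + Pᴴ * (T k * (Bᴴ * B) * (T k)ᴴ) * P := fun k => by
    simp only [A, conjTranspose_sub, conjTranspose_mul, conjTranspose_conjTranspose,
      Matrix.sub_mul, Matrix.mul_sub, Matrix.mul_assoc, Matrix.mul_one]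
    abel
  have hsum : ∑ k, (A k)ᴴ * A k = 0 := calc
    ∑ k, (A k)ᴴ * A k = Pᴴ * Bᴴ * krausMap T 1 * B * P - Pᴴ * Bᴴ * (krausMap T B * P)
        - Pᴴ * krausMap T Bᴴ * B * P + Pᴴ * (krausMap T (Bᴴ * B) * P) := by
      simp only [hA, krausMap, Finset.sum_add_distrib, Finset.sum_sub_distrib,
        Matrix.mul_sum, Matrix.sum_mul, Matrix.mul_assoc]
    _ = 0 := by
      rw [hT, h', h, h]
      simp only [Matrix.mul_one, Matrix.mul_assoc]
      abel
  exact sub_eq_zero.mp (eq_zero_of_sum_conjTranspose_mul_self_eq_zero hsum k)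

open Matrix ComplexOrder in
theorem stmt_12_general {m n : ℕ} {p q : ℕ}
    (R : Fin p → Matrix (Fin m) (Fin n) ℂ) (F : Fin q → Matrix (Fin n) (Fin m) ℂ)
    (hRunital : ∑ i, R i * (R i)ᴴ = 1)
    (hFunital : ∑ j, F j * (F j)ᴴ = 1)
    (σ : Matrix (Fin m) (Fin m) ℂ) (hσtr : σ.trace = 1)
    (P : Matrix (Fin m) (Fin m) ℂ)
    (hsupp : ∀ B : Matrix (Fin m) (Fin m) ℂ, (σ * (Bᴴ * B)).trace = 0 ↔ B * P = 0)
    (hae : ∀ B : Matrix (Fin m) (Fin m) ℂ,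
      (∑ i, R i * (∑ j, F j * B * (F j)ᴴ) * (R i)ᴴ) * P = B * P) :
    ∃ α : Fin p → Fin q → ℂ,
      (∀ i j, R i * F j = α i j • (1 : Matrix (Fin m) (Fin m) ℂ)) ∧
      (∑ i, ∑ j, ‖α i j‖ ^ 2 = 1) ∧
      (∀ B : Matrix (Fin m) (Fin m) ℂ,
        ∑ i, R i * (∑ j, F j * B * (F j)ᴴ) * (R i)ᴴ = B) := by
  set T : Fin p × Fin q → Matrix (Fin m) (Fin m) ℂ := fun k => R k.1 * F k.2
  have hcomp (B : Matrix (Fin m) (Fin m) ℂ) :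
      ∑ i, R i * (∑ j, F j * B * (F j)ᴴ) * (R i)ᴴ = krausMap T B :=
    krausMap_krausMap R F B
  have hT1 : krausMap T 1 = 1 := by
    simpa only [← hcomp, Matrix.mul_one, hFunital] using hRunital
  have hP : P ≠ 0 := by
    rintro rfl
    simpa [hσtr] using (hsupp 1).2 (Matrix.mul_zero 1)
  have hscalar (k : Fin p × Fin q) : ∃ c : ℂ, T k = c • 1 := by
    obtain ⟨c, hc⟩ := exists_eq_smul_one_of_mul_mul_eq hP
      (conjTranspose_mul_mul_eq_of_krausMap_mul_eq hT1 (fun B => hcomp B ▸ hae B) · k)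
    exact ⟨star c, by simpa using congrArg conjTranspose hc⟩
  choose α hα using hscalar
  have hTα : T = fun k => α k • 1 := funext hα
  have hnorm : ∑ k, ‖α k‖ ^ 2 = 1 := by
    have hone : (1 : Matrix (Fin m) (Fin m) ℂ) ≠ 0 := fun h => hP <| by
      rw [← P.mul_one, h, P.mul_zero]
    rw [hTα, krausMap_smul_one] at hT1
    exact RCLike.ofReal_injective <|
      (smul_left_injective ℂ hone (hT1.trans (one_smul ℂ 1).symm)).trans RCLike.ofReal_one.symm
  refine ⟨fun i j => α (i, j), fun i j => hα (i, j), ?_, fun B => ?_⟩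
  · simpa only [Fintype.sum_prod_type] using hnorm
  · rw [hcomp, hTα, krausMap_smul_one, hnorm, RCLike.ofReal_one, one_smul]

open Matrix ComplexOrder in
theorem stmt_12 {m n : ℕ} {p q : ℕ}
    (R : Fin p → Matrix (Fin m) (Fin n) ℂ) (F : Fin q → Matrix (Fin n) (Fin m) ℂ)
    (hRunital : ∑ i, R i * (R i)ᴴ = 1)
    (hFunital : ∑ j, F j * (F j)ᴴ = 1)
    (σ : Matrix (Fin m) (Fin m) ℂ) (hσ : σ.PosSemidef) (hσtr : σ.trace = 1)
    (P : Matrix (Fin m) (Fin m) ℂ) (hP1 : Pᴴ = P) (hP2 : P * P = P)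
    (hsupp : ∀ B : Matrix (Fin m) (Fin m) ℂ, (σ * (Bᴴ * B)).trace = 0 ↔ B * P = 0)
    (hae : ∀ B : Matrix (Fin m) (Fin m) ℂ,
      (∑ i, R i * (∑ j, F j * B * (F j)ᴴ) * (R i)ᴴ) * P = B * P) :
    ∃ α : Fin p → Fin q → ℂ,
      (∀ i j, R i * F j = α i j • (1 : Matrix (Fin m) (Fin m) ℂ)) ∧
      (∑ i, ∑ j, ‖α i j‖ ^ 2 = 1) ∧
      (∀ B : Matrix (Fin m) (Fin m) ℂ,
        ∑ i, R i * (∑ j, F j * B * (F j)ᴴ) * (R i)ᴴ = B) :=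
  stmt_12_general R F hRunital hFunital σ hσtr P hsupp hae
end
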